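/- arXiv:1008.3401 — 6 statements merged into one kernel-verified Lean document; each statement's English description precedes it below -/
import Mathlib

section
/- Let A be a multiplicative character of F_q^× and x ∈ F_q with x ≠ 1. Then the Gaussian hypergeometric function 2F1(A, A⁻¹; ε | x) equals 2F1(A⁻¹, A; ε | x). -/
/-!
Both sides are sums of character values at one rational function of `y`: for `B = Ā, C = ε`
the summand of `₂F₁(A, Ā; ε | x)` is `A((1 - y) / (y (1 - x y)))`, and swapping `A` and `Ā`
replaces this argument by its inverse. The Möbius transformation `y ↦ (1 - y) / (1 - x y)`, an
involution of the projective line for `x ≠ 1`, carries the argument to its inverse, so the two sums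
agree; the signs `A(-1)` and `Ā(-1)` are equal since `-1` is its own inverse.
-/

/-- Greene's Gaussian hypergeometric function `₂F₁(A,B;C|x)` over a finite field `F`:
`₂F₁(A,B;C|x) = ε(x)·(BC(-1)/q)·Σ_{y∈F} B(y)·(B̄C)(1-y)·Ā(1-xy)`,
where characters are extended by `χ 0 = 0`, `ε` is the trivial character and `χ̄ = χ⁻¹`. -/
noncomputable def hyp2F1 {F : Type*} [Field F] [Fintype F]
    (A B C : MulChar F ℂ) (x : F) : ℂ :=
  (1 : MulChar F ℂ) x * ((B * C) (-1) / (Fintype.card F : ℂ)) *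
    ∑ y : F, B y * (B⁻¹ * C) (1 - y) * A⁻¹ (1 - x * y)

section

variable {F : Type*} [Field F]

section MobiusSwap

variable [DecidableEq F] {x : F}

/-- The pole `y = 1/x` would be sent to `∞` (and `∞` back to `1/x`); fixing it instead keeps the
map an involution of `F`. -/
def mobiusSwap (x y : F) : F :=
  if x * y = 1 then y else (1 - y) / (1 - x * y)

lemma mobiusSwap_of_mul_ne_one {y : F} (hxy : x * y ≠ 1) :
    mobiusSwap x y = (1 - y) / (1 - x * y) :=
  if_neg hxy

lemma one_sub_mobiusSwap {y : F} (hxy : x * y ≠ 1) :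
    1 - mobiusSwap x y = y * (1 - x) / (1 - x * y) := by
  have hu : 1 - x * y ≠ 0 := sub_ne_zero.mpr (Ne.symm hxy)
  rw [mobiusSwap_of_mul_ne_one hxy, eq_div_iff hu, sub_mul, div_mul_cancel₀ _ hu]
  ring

lemma one_sub_mul_mobiusSwap {y : F} (hxy : x * y ≠ 1) :
    1 - x * mobiusSwap x y = (1 - x) / (1 - x * y) := by
  have hu : 1 - x * y ≠ 0 := sub_ne_zero.mpr (Ne.symm hxy)
  rw [mobiusSwap_of_mul_ne_one hxy, eq_div_iff hu, sub_mul, mul_assoc, div_mul_cancel₀ _ hu]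
  ring

lemma mobiusSwap_involutive (hx : x ≠ 1) : Function.Involutive (mobiusSwap x) := by
  intro y
  by_cases hxy : x * y = 1
  · simp only [mobiusSwap, hxy, if_true]
  have hu : 1 - x * y ≠ 0 := sub_ne_zero.mpr (Ne.symm hxy)
  have h1x : 1 - x ≠ 0 := sub_ne_zero.mpr (Ne.symm hx)
  have hxy' : x * mobiusSwap x y ≠ 1 := by
    rw [← sub_ne_zero, ← neg_sub, neg_ne_zero, one_sub_mul_mobiusSwap hxy]
    exact div_ne_zero h1x hu
  rw [mobiusSwap_of_mul_ne_one hxy', one_sub_mobiusSwap hxy, one_sub_mul_mobiusSwap hxy,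
    div_div_div_cancel_right₀ hu, mul_div_cancel_right₀ _ h1x]

end MobiusSwap

/-- At `y = 0` and `y = 1/x` the division by zero makes this `0`, matching the vanishing of the
summand of `₂F₁` there. -/
def hyp2F1SummandArg (x y : F) : F :=
  (1 - y) / (y * (1 - x * y))

lemma hyp2F1SummandArg_mobiusSwap [DecidableEq F] {x : F} (hx : x ≠ 1) (y : F) :
    hyp2F1SummandArg x (mobiusSwap x y) = (hyp2F1SummandArg x y)⁻¹ := by
  by_cases hxy : x * y = 1
  · simp [mobiusSwap, hyp2F1SummandArg, hxy]
  have hu : 1 - x * y ≠ 0 := sub_ne_zero.mpr (Ne.symm hxy)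
  have h1x : 1 - x ≠ 0 := sub_ne_zero.mpr (Ne.symm hx)
  rw [hyp2F1SummandArg, one_sub_mobiusSwap hxy, one_sub_mul_mobiusSwap hxy,
    mobiusSwap_of_mul_ne_one hxy, hyp2F1SummandArg]
  field_simp

lemma sum_comp_inv_hyp2F1SummandArg [Fintype F] {M : Type*} [AddCommMonoid M] {x : F}
    (hx : x ≠ 1) (φ : F → M) :
    ∑ y, φ (hyp2F1SummandArg x y)⁻¹ = ∑ y, φ (hyp2F1SummandArg x y) := by
  classical
  refine Fintype.sum_equiv (mobiusSwap_involutive hx).toPerm _ _ fun y => ?_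
  rw [Function.Involutive.coe_toPerm, hyp2F1SummandArg_mobiusSwap hx]

lemma MulChar.inv_mul_mul_inv_eq_hyp2F1SummandArg {R : Type*} [CommMonoidWithZero R]
    (χ : MulChar F R) (x y : F) :
    χ⁻¹ y * χ (1 - y) * χ⁻¹ (1 - x * y) = χ (hyp2F1SummandArg x y) := by
  rw [MulChar.inv_apply', MulChar.inv_apply', ← map_mul, ← map_mul, hyp2F1SummandArg,
    div_eq_mul_inv, mul_inv]
  ring_nf

lemma MulChar.inv_apply_neg_one {R : Type*} [CommMonoidWithZero R] (χ : MulChar F R) :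
    χ⁻¹ (-1) = χ (-1) := by
  rw [MulChar.inv_apply', inv_neg, inv_one]

lemma hyp2F1_inv_one [Fintype F] (A : MulChar F ℂ) (x : F) :
    hyp2F1 A A⁻¹ 1 x =
      (1 : MulChar F ℂ) x * (A (-1) / Fintype.card F) * ∑ y, A (hyp2F1SummandArg x y) := by
  simp only [hyp2F1, mul_one, inv_inv, MulChar.inv_apply_neg_one,
    MulChar.inv_mul_mul_inv_eq_hyp2F1SummandArg]

end

/-- For a multiplicative character `A` of a finite field `F` and `x ≠ 1`,
`₂F₁(A, A⁻¹; ε | x) = ₂F₁(A⁻¹, A; ε | x)`. -/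
theorem hyp2F1_inv_swap {F : Type*} [Field F] [Fintype F] (A : MulChar F ℂ) (x : F)
    (hx : x ≠ 1) :
    hyp2F1 A A⁻¹ 1 x = hyp2F1 A⁻¹ A 1 x := by
  have h := hyp2F1_inv_one A⁻¹ x
  rw [inv_inv, MulChar.inv_apply_neg_one] at h
  rw [hyp2F1_inv_one, h]
  simp only [MulChar.inv_apply', sum_comp_inv_hyp2F1SummandArg hx]
end

section
/- Let q ≡ 1 (mod l) be a prime power, l a positive integer, and let a = m/n, b = s/r be rationals in (0,1) with l = lcm(n,r). For z ∈ F_q, z ≠ 0,1, let N be the number of projective points on the smooth curve with affine equation y^l = t^{l(1-b)}(1-t)^{lb}(1-zt)^{la}. Then N = q + 1 + q·Σ_{i=1}^{l-1} η^{ilb}(-1) · 2F1(η^{il(1-a)}, η^{il(1-b)}; ε | z), where η is a multiplicative character of F_q^× of order l. -/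
open Finset

section Aux

variable {F : Type*} [Field F] [Fintype F]

private lemma eta_pow_l {l : ℕ} (η : MulChar F ℂ) (hη : orderOf η = l) : η ^ l = 1 := by
  rw [← hη]; exact pow_orderOf_eq_one η

/-- For `c ≠ 0`, `c` is an `l`-th power iff `η c = 1`, where `η` has order `l`. -/
private lemma exists_pow_iff {l : ℕ} (hl2 : 2 ≤ l) (η : MulChar F ℂ) (hη : orderOf η = l)
    {c : F} (hc : c ≠ 0) : (∃ α : F, α ^ l = c) ↔ η c = 1 := by
  have hηl : η ^ l = 1 := eta_pow_l η hη
  constructor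
  · rintro ⟨α, rfl⟩
    have hα0 : α ≠ 0 := fun h => hc (by simp [h, zero_pow (by omega : l ≠ 0)])
    rw [map_pow, ← MulChar.pow_apply' η (by omega : l ≠ 0), hηl,
      MulChar.one_apply (isUnit_iff_ne_zero.mpr hα0)]
  · intro h1
    obtain ⟨g, hg⟩ := IsCyclic.exists_generator (α := Fˣ)
    have hcu : IsUnit c := isUnit_iff_ne_zero.mpr hc
    obtain ⟨k, hk⟩ : ∃ k : ℕ, g ^ k = hcu.unit := by
      have := hg hcu.unit
      rwa [← mem_powers_iff_mem_zpowers, Submonoid.mem_powers_iff] at this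
    have h2 : (η ↑g) ^ l = 1 := by
      rw [← MulChar.pow_apply' η (by omega : l ≠ 0), hηl, MulChar.one_apply_coe]
    have hdvd1 : orderOf (η ↑g) ∣ l := orderOf_dvd_of_pow_eq_one h2
    have hne : orderOf (η ↑g) ≠ 0 := by
      intro h0
      rw [h0] at hdvd1
      exact absurd (Nat.eq_zero_of_zero_dvd hdvd1) (by omega)
    have hdvd2 : l ∣ orderOf (η ↑g) := by
      rw [← hη]
      apply orderOf_dvd_of_pow_eq_one
      rw [MulChar.eq_iff hg, MulChar.pow_apply' η hne, MulChar.one_apply_coe,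
        pow_orderOf_eq_one]
    have hx : orderOf (η ↑g) = l := Nat.dvd_antisymm hdvd1 hdvd2
    have hlk : l ∣ k := by
      rw [← hx, orderOf_dvd_iff_pow_eq_one, ← map_pow, ← Units.val_pow_eq_pow_val, hk]
      rw [IsUnit.unit_spec]
      exact h1
    obtain ⟨d, rfl⟩ := hlk
    refine ⟨↑(g ^ d), ?_⟩
    rw [← Units.val_pow_eq_pow_val, ← pow_mul, mul_comm d l, hk, IsUnit.unit_spec]

/-- Geometric character sum. -/
private lemma char_sum_geom {l : ℕ} (hl2 : 2 ≤ l) (η : MulChar F ℂ) (hη : orderOf η = l)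
    {c : F} (hc : c ≠ 0) :
    ∑ j ∈ Finset.range l, (η ^ j) c = if η c = 1 then (l : ℂ) else 0 := by
  have hηl : η ^ l = 1 := eta_pow_l η hη
  have hcl : (η c) ^ l = 1 := by
    rw [← MulChar.pow_apply' η (by omega : l ≠ 0), hηl,
      MulChar.one_apply (isUnit_iff_ne_zero.mpr hc)]
  have key : ∀ j ∈ Finset.range l, (η ^ j) c = (η c) ^ j := by
    intro j _
    rcases Nat.eq_zero_or_pos j with rfl | hj
    · rw [pow_zero, pow_zero, MulChar.one_apply (isUnit_iff_ne_zero.mpr hc)]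
    · exact MulChar.pow_apply' η hj.ne' c
  rw [Finset.sum_congr rfl key]
  split_ifs with h1
  · simp [h1]
  · rw [geom_sum_eq h1, hcl, sub_self, zero_div]

open Classical in
/-- Number of `l`-th roots of `c` in a finite field with `l ∣ q - 1`. -/
private lemma ncard_pow_eq {l : ℕ} (hl2 : 2 ≤ l) (hdvd : l ∣ Fintype.card F - 1) (c : F) :
    ({y : F | y ^ l = c}.ncard : ℂ) =
      if c = 0 then 1 else if ∃ α : F, α ^ l = c then (l : ℂ) else 0 := by
  haveI : NeZero l := ⟨by omega⟩
  rcases eq_or_ne c 0 with rfl | hc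
  · have hset : {y : F | y ^ l = (0 : F)} = {0} := by
      ext y; simp [pow_eq_zero_iff (show l ≠ 0 by omega)]
    rw [hset, if_pos rfl, Set.ncard_singleton, Nat.cast_one]
  · rw [if_neg hc]
    -- obtain a primitive l-th root of unity
    obtain ⟨g, hg⟩ := IsCyclic.exists_generator (α := Fˣ)
    have hq1 : 0 < Fintype.card F - 1 := by
      have := Fintype.one_lt_card (α := F); omega
    have hgo : orderOf g = Fintype.card F - 1 := by
      rw [orderOf_eq_card_of_forall_mem_zpowers hg, Nat.card_eq_fintype_card, Fintype.card_units]
    have hord : orderOf (g ^ (orderOf g / l)) = l :=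
      orderOf_pow_orderOf_div (by omega) (by rw [hgo]; exact hdvd)
    set ζu : Fˣ := g ^ (orderOf g / l) with hζu
    have hζ : IsPrimitiveRoot ((ζu : F)) l := by
      rw [IsPrimitiveRoot.coe_units_iff, ← hord]
      exact IsPrimitiveRoot.orderOf ζu
    by_cases h : ∃ α : F, α ^ l = c
    · obtain ⟨α, hα⟩ := h
      have hα0 : α ≠ 0 := by
        rintro rfl; exact hc (by simpa [zero_pow (show l ≠ 0 by omega)] using hα.symm)
      have hset : {y : F | y ^ l = c} = ((ζu : F) ^ · * α) '' ↑(Finset.range l) := by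
        ext y
        simp only [Set.mem_setOf_eq, Set.mem_image, Finset.coe_range, Set.mem_Iio]
        constructor
        · intro hy
          have h1 : (y * α⁻¹) ^ l = 1 := by
            rw [mul_pow, hy, ← hα, inv_pow, mul_inv_cancel₀ (pow_ne_zero _ hα0)]
          obtain ⟨i, hi, hie⟩ := hζ.eq_pow_of_pow_eq_one h1
          exact ⟨i, hi, by rw [hie]; field_simp⟩
        · rintro ⟨i, hi, rfl⟩
          show ((ζu : F) ^ i * α) ^ l = c
          rw [mul_pow, ← pow_mul, mul_comm i l, pow_mul, hζ.pow_eq_one, one_pow, one_mul, hα]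
      rw [hset, Set.ncard_image_of_injOn (hζ.injOn_pow_mul hα0), Set.ncard_coe_finset,
        Finset.card_range, if_pos ⟨α, hα⟩]
    · have hset : {y : F | y ^ l = c} = ∅ := by
        ext y; simp only [Set.mem_setOf_eq, Set.mem_empty_iff_false, iff_false]
        exact fun hy => h ⟨y, hy⟩
      rw [hset, Set.ncard_empty, if_neg h, Nat.cast_zero]

open Classical in
/-- Key counting lemma via characters. -/
private lemma ncard_pow_eq_char_sum {l : ℕ} (hl2 : 2 ≤ l) (η : MulChar F ℂ)
    (hη : orderOf η = l) (c : F) :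
    ({y : F | y ^ l = c}.ncard : ℂ) =
      (if c = 0 then 1 else 0) + ∑ j ∈ Finset.range l, (η ^ j) c := by
  have hdvd : l ∣ Fintype.card F - 1 := hη ▸ MulChar.orderOf_dvd_card_sub_one F η
  rw [ncard_pow_eq hl2 hdvd c]
  rcases eq_or_ne c 0 with rfl | hc
  · have h0 : ∀ j ∈ Finset.range l, (η ^ j) (0 : F) = 0 := fun j _ =>
      MulChar.map_nonunit _ not_isUnit_zero
    rw [if_pos rfl, if_pos rfl, Finset.sum_congr rfl h0, Finset.sum_const_zero, add_zero]
  · rw [if_neg hc, if_neg hc, char_sum_geom hl2 η hη hc, zero_add]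
    by_cases h : η c = 1
    · rw [if_pos ((exists_pow_iff hl2 η hη hc).mpr h), if_pos h]
    · rw [if_neg (fun hx => h ((exists_pow_iff hl2 η hη hc).mp hx)), if_neg h]

end Aux

/-- Let `F` be a finite field with `q ≡ 1 (mod l)` elements, `a = m/n`,
`b = s/r` rationals in `(0,1)` with `l = lcm(n,r)` (so `la = l·m/n`, `lb = l·s/r` are
integers), and `z ∈ F`, `z ≠ 0, 1`. The number `N` of projective points of the curve
`y^l = t^{l(1-b)}(1-t)^{lb}(1-zt)^{la}` (the affine solutions plus the point at infinity)
satisfies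
`N = q + 1 + q·Σ_{i=1}^{l-1} η^{ilb}(-1)·₂F₁(η^{il(1-a)}, η^{il(1-b)}; ε | z)`,
where `η` is a multiplicative character of `F` of order `l`. -/
theorem count_points_curve_eq_hyp2F1_sum {F : Type*} [Field F] [Fintype F]
    (m n s r : ℕ) (hm : 0 < m) (hmn : m < n) (hs : 0 < s) (hsr : s < r)
    (l : ℕ) (hl : l = Nat.lcm n r) (hq : Fintype.card F % l = 1)
    (z : F) (hz0 : z ≠ 0) (hz1 : z ≠ 1) (η : MulChar F ℂ) (hη : orderOf η = l) :
    ((1 + ∑ t : F,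
        {y : F | y ^ l = t ^ (l - l * s / r) * (1 - t) ^ (l * s / r)
          * (1 - z * t) ^ (l * m / n)}.ncard : ℕ) : ℂ) =
      (Fintype.card F : ℂ) + 1 + (Fintype.card F : ℂ) *
        ∑ i ∈ Finset.Icc 1 (l - 1), (η ^ (i * (l * s / r))) (-1) *
          hyp2F1 (η ^ (i * (l - l * m / n))) (η ^ (i * (l - l * s / r))) 1 z := by
  classical
  have hq2 : 2 ≤ Fintype.card F := Fintype.one_lt_card
  have hl0 : l ≠ 0 := by rintro rfl; rw [Nat.mod_zero] at hq; omega
  have hl1 : l ≠ 1 := by rintro rfl; omega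
  have hl2 : 2 ≤ l := by omega
  have hn0 : 0 < n := by omega
  have hr0 : 0 < r := by omega
  have hnl : n ∣ l := hl ▸ Nat.dvd_lcm_left n r
  have hrl : r ∣ l := hl ▸ Nat.dvd_lcm_right n r
  have hlpos : 0 < l := by omega
  set lb := l * s / r with hlbdef
  set la := l * m / n with hladef
  have hlb0 : 0 < lb := by
    apply Nat.div_pos _ hr0
    calc r ≤ l := Nat.le_of_dvd hlpos hrl
    _ = l * 1 := (mul_one l).symm
    _ ≤ l * s := Nat.mul_le_mul_left l hs
  have hlbl : lb < l := by
    rw [hlbdef, Nat.div_lt_iff_lt_mul hr0]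
    exact (Nat.mul_lt_mul_left hlpos).mpr hsr
  have hla0 : 0 < la := by
    apply Nat.div_pos _ hn0
    calc n ≤ l := Nat.le_of_dvd hlpos hnl
    _ = l * 1 := (mul_one l).symm
    _ ≤ l * m := Nat.mul_le_mul_left l hm
  have hlal : la < l := by
    rw [hladef, Nat.div_lt_iff_lt_mul hn0]
    exact (Nat.mul_lt_mul_left hlpos).mpr hmn
  have hηl : η ^ l = 1 := eta_pow_l η hη
  set q : ℕ := Fintype.card F with hqd
  have hqC : (q : ℂ) ≠ 0 := Nat.cast_ne_zero.mpr (by omega)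
  set f : F → F := fun t => t ^ (l - lb) * (1 - t) ^ lb * (1 - z * t) ^ la with hf
  have hfapp : ∀ t : F, f t = t ^ (l - lb) * (1 - t) ^ lb * (1 - z * t) ^ la :=
    fun t => rfl
  -- the zero set of f is {0, 1, z⁻¹}
  have hzinv : z⁻¹ ≠ 0 := inv_ne_zero hz0
  have h1z : (1 : F) ≠ z⁻¹ := fun h => hz1 (by rw [← inv_inv z, ← h, inv_one])
  have hzt' : ∀ t : F, z * t = 1 ↔ t = z⁻¹ := by
    intro t
    rw [mul_comm z t, ← one_div z]
    exact (eq_div_iff hz0).symm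
  have hS : ∀ t : F, f t = 0 ↔ t ∈ ({0, 1, z⁻¹} : Finset F) := by
    intro t
    rw [hfapp t]
    simp only [mul_eq_zero, pow_eq_zero_iff (show l - lb ≠ 0 by omega),
      pow_eq_zero_iff (show lb ≠ 0 by omega), pow_eq_zero_iff (show la ≠ 0 by omega),
      sub_eq_zero (a := (1 : F)), Finset.mem_insert, Finset.mem_singleton]
    rw [eq_comm (a := (1 : F)) (b := t), eq_comm (a := (1 : F)) (b := z * t), hzt' t,
      or_assoc]
  have h0m : (0 : F) ∉ ({1, z⁻¹} : Finset F) := by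
    simp only [Finset.mem_insert, Finset.mem_singleton]
    push_neg
    exact ⟨zero_ne_one, fun h => hzinv h.symm⟩
  have h1m : (1 : F) ∉ ({z⁻¹} : Finset F) := by simpa using h1z
  have hcardS : ({0, 1, z⁻¹} : Finset F).card = 3 := by
    rw [Finset.card_insert_of_notMem h0m, Finset.card_insert_of_notMem h1m,
      Finset.card_singleton]
  have hsum3 : ∑ t : F, (if f t = 0 then (1 : ℂ) else 0) = 3 := by
    have : ∀ t : F, (if f t = 0 then (1 : ℂ) else 0)
        = (if t ∈ ({0, 1, z⁻¹} : Finset F) then (1 : ℂ) else 0) := by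
      intro t
      by_cases h : t ∈ ({0, 1, z⁻¹} : Finset F)
      · rw [if_pos ((hS t).mpr h), if_pos h]
      · rw [if_neg (fun hx => h ((hS t).mp hx)), if_neg h]
    rw [Finset.sum_congr rfl fun t _ => this t, Finset.sum_ite_mem, Finset.univ_inter,
      Finset.sum_const, hcardS]
    norm_num
  -- main term at j = 0
  have hsum0 : ∑ t : F, (1 : MulChar F ℂ) (f t) = (q : ℂ) - 3 := by
    have h1 : ∀ t : F, (1 : MulChar F ℂ) (f t) = 1 - (if f t = 0 then (1 : ℂ) else 0) := by
      intro t
      by_cases h : f t = 0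
      · rw [if_pos h, h, MulChar.map_nonunit _ not_isUnit_zero, sub_self]
      · rw [if_neg h, MulChar.one_apply (isUnit_iff_ne_zero.mpr h), sub_zero]
    rw [Finset.sum_congr rfl fun t _ => h1 t, Finset.sum_sub_distrib, hsum3,
      Finset.sum_const, Finset.card_univ, nsmul_eq_mul, mul_one]
  -- nontrivial terms
  have hterm : ∀ i ∈ Finset.Icc 1 (l - 1),
      ∑ t : F, (η ^ i) (f t) =
        (q : ℂ) * ((η ^ (i * lb)) (-1) *
          hyp2F1 (η ^ (i * (l - la))) (η ^ (i * (l - lb))) 1 z) := by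
    intro i hi
    have hBmul : η ^ (i * (l - lb)) * η ^ (i * lb) = 1 := by
      rw [← pow_add, ← Nat.mul_add, Nat.sub_add_cancel hlbl.le, mul_comm i l, pow_mul, hηl,
        one_pow]
    have hAmul : η ^ (i * (l - la)) * η ^ (i * la) = 1 := by
      rw [← pow_add, ← Nat.mul_add, Nat.sub_add_cancel hlal.le, mul_comm i l, pow_mul, hηl,
        one_pow]
    have hBinv : (η ^ (i * (l - lb)))⁻¹ = η ^ (i * lb) := inv_eq_of_mul_eq_one_right hBmul
    have hAinv : (η ^ (i * (l - la)))⁻¹ = η ^ (i * la) := inv_eq_of_mul_eq_one_right hAmul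
    have hone : (η ^ (i * lb)) (-1 : F) * (η ^ (i * (l - lb))) (-1 : F) = 1 := by
      have : (η ^ (i * lb)) (-1 : F) * (η ^ (i * (l - lb))) (-1 : F)
          = (η ^ (i * lb) * η ^ (i * (l - lb))) (-1 : F) := by
        rw [MulChar.coeToFun_mul, Pi.mul_apply]
      rw [this, mul_comm (η ^ (i * lb)), hBmul, MulChar.one_apply isUnit_one.neg]
    have hsum : ∑ y : F, (η ^ (i * (l - lb))) y * (η ^ (i * (l - lb)))⁻¹ (1 - y)
          * (η ^ (i * (l - la)))⁻¹ (1 - z * y) = ∑ t : F, (η ^ i) (f t) := by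
      apply Finset.sum_congr rfl
      intro t _
      rw [hBinv, hAinv]
      symm
      rw [hfapp t]
      rw [map_mul, map_mul, map_pow, map_pow, map_pow,
        ← MulChar.pow_apply' (η ^ i) (show l - lb ≠ 0 by omega),
        ← MulChar.pow_apply' (η ^ i) (show lb ≠ 0 by omega),
        ← MulChar.pow_apply' (η ^ i) (show la ≠ 0 by omega),
        ← pow_mul, ← pow_mul, ← pow_mul]
    rw [hyp2F1, mul_one, mul_one, MulChar.one_apply (isUnit_iff_ne_zero.mpr hz0), one_mul,
      hsum]
    have hexp : (Fintype.card F : ℂ) = (q : ℂ) := by rw [hqd]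
    rw [hexp]
    set T := ∑ t : F, (η ^ i) (f t) with hT
    have hq' : (q : ℂ) * ((η ^ (i * lb)) (-1 : F) *
          ((η ^ (i * (l - lb))) (-1 : F) / (q : ℂ) * T))
        = ((η ^ (i * lb)) (-1 : F) * (η ^ (i * (l - lb))) (-1 : F)) * T := by
      field_simp
    rw [hq', hone, one_mul]
  -- split the range sum
  have hsplit : ∀ G : ℕ → ℂ,
      ∑ j ∈ Finset.range l, G j = G 0 + ∑ j ∈ Finset.Icc 1 (l - 1), G j := by
    intro G
    have h1 : Finset.Icc 1 (l - 1) = Finset.Ico 1 l := by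
      rw [← Finset.Ico_add_one_right_eq_Icc]
      congr 1
      omega
    rw [h1, Finset.range_eq_Ico,
      ← Finset.sum_Ico_consecutive G (by omega : 0 ≤ 1) (by omega : 1 ≤ l)]
    congr 1
    rw [show Finset.Ico 0 1 = Finset.range 1 from by rw [Finset.range_eq_Ico],
      Finset.sum_range_one]
  -- put everything together
  have hmain : (∑ t : F, ({y : F | y ^ l = f t}.ncard : ℂ))
      = 3 + ((q : ℂ) - 3 + ∑ i ∈ Finset.Icc 1 (l - 1), ∑ t : F, (η ^ i) (f t)) := by
    have h1 : ∀ t : F, ({y : F | y ^ l = f t}.ncard : ℂ)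
        = (if f t = 0 then 1 else 0) + ∑ j ∈ Finset.range l, (η ^ j) (f t) :=
      fun t => ncard_pow_eq_char_sum hl2 η hη (f t)
    rw [Finset.sum_congr rfl fun t _ => h1 t, Finset.sum_add_distrib, hsum3,
      Finset.sum_comm, hsplit fun j => ∑ t : F, (η ^ j) (f t)]
    simp only [pow_zero]
    rw [hsum0]
  have hLHS : ((1 + ∑ t : F,
        {y : F | y ^ l = t ^ (l - lb) * (1 - t) ^ lb * (1 - z * t) ^ la}.ncard : ℕ) : ℂ)
      = 1 + ∑ t : F, ({y : F | y ^ l = f t}.ncard : ℂ) := by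
    push_cast
    rfl
  rw [hLHS, hmain, Finset.mul_sum, Finset.sum_congr rfl hterm]
  push_cast
  ring
end

section
/- Let l be an odd prime and q a prime with q ≡ 1 (mod l). Let m, m', s, s' be integers with 1 ≤ m,m',s,s' < l, m+s = l, m'+s' = l, and z ∈ F_q with z ≠ 0,1. Then for every positive integer k, the curves y^l = t^m(1-t)^s(1-zt)^m and y^l = t^{m'}(1-t)^{s'}(1-zt)^{m'} have the same number of projective points over F_{q^k}. -/
/-!
With `g = t(1-zt)/(1-t)` we have `t^m (1-t)^s (1-zt)^m = g^m (1-t)^l`, and for `t = 1` both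
sides of the curve equation are `0` (there `g = 0`, as `x / 0 = 0`), so the fibre over `t` has as
many points as `y^l = g^m`. Since `m` is prime to `l`, raising to the powers `m` and `j`, where
`m j ≡ 1 (mod l)`, injects the `l`-th roots of `g` and of `g^m` into each other up to rescaling
by an `l`-th power; hence the fibre count does not depend on `m`.
-/

open Set

section RootCount

variable {G : Type*} [CommGroupWithZero G] {l : ℕ}

lemma ncard_setOf_pow_eq_mul_pow (c : G) {d : G} (hd : d ≠ 0) :
    {y : G | y ^ l = c * d ^ l}.ncard = {y : G | y ^ l = c}.ncard := by
  have himage : (· * d) '' {y : G | y ^ l = c} = {y : G | y ^ l = c * d ^ l} := by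
    ext y
    refine ⟨?_, fun hy => ⟨y / d, ?_, div_mul_cancel₀ y hd⟩⟩
    · rintro ⟨x, hx, rfl⟩
      rw [mem_ofPred_eq, mul_pow, hx]
    · rw [mem_ofPred_eq, div_pow, hy, mul_div_cancel_right₀ _ (pow_ne_zero _ hd)]
  rw [← himage, ncard_image_of_injective _ (mul_left_injective₀ hd)]

lemma ncard_setOf_pow_eq_pow_mod {c : G} (hc : c ≠ 0) (n : ℕ) :
    {y : G | y ^ l = c ^ n}.ncard = {y : G | y ^ l = c ^ (n % l)}.ncard := by
  conv_lhs => rw [← Nat.mod_add_div n l, pow_add, mul_comm l, pow_mul]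
  exact ncard_setOf_pow_eq_mul_pow _ (pow_ne_zero _ hc)

lemma eq_of_pow_eq_of_pow_eq_of_coprime {a b : G} (hb : b ≠ 0) {j : ℕ} (hj : j.Coprime l)
    (hjab : a ^ j = b ^ j) (hlab : a ^ l = b ^ l) : a = b := by
  have hdiv : (a / b) ^ j.gcd l = 1 :=
    pow_gcd_eq_one.mpr ⟨by rw [div_pow, hjab, div_self (pow_ne_zero _ hb)],
      by rw [div_pow, hlab, div_self (pow_ne_zero _ hb)]⟩
  rwa [hj, pow_one, div_eq_one_iff_eq hb] at hdiv

lemma ncard_setOf_pow_eq_le_pow [Finite G] {c : G} (hc : c ≠ 0) {j : ℕ} (hj : j.Coprime l)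
    (hl : l ≠ 0) :
    {y : G | y ^ l = c}.ncard ≤ {y : G | y ^ l = c ^ j}.ncard := by
  refine ncard_le_ncard_of_injOn (· ^ j) (fun y hy => ?_) (fun a ha b hb hab => ?_)
  · rw [mem_ofPred_eq, ← pow_mul, mul_comm, pow_mul, hy]
  · have hb0 : b ≠ 0 := by
      rintro rfl
      exact hc (hb.symm.trans (zero_pow hl))
    exact eq_of_pow_eq_of_pow_eq_of_coprime hb0 hj hab (ha.trans hb.symm)

lemma ncard_setOf_pow_eq_pow_of_coprime [Finite G] {c : G} (hc : c ≠ 0) {n : ℕ}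
    (hn : n.Coprime l) (hl : 1 < l) :
    {y : G | y ^ l = c ^ n}.ncard = {y : G | y ^ l = c}.ncard := by
  obtain ⟨j, -, hnj⟩ := Nat.exists_mul_mod_eq_one_of_coprime hn hl
  have hj : j.Coprime l := Nat.Coprime.coprime_mul_left <|
    (ZMod.coprime_mod_iff_coprime _ _).mp (hnj ▸ Nat.coprime_one_left l)
  refine le_antisymm ?_ (ncard_setOf_pow_eq_le_pow hc hn (by omega))
  calc {y : G | y ^ l = c ^ n}.ncard
      ≤ {y : G | y ^ l = (c ^ n) ^ j}.ncard :=
        ncard_setOf_pow_eq_le_pow (pow_ne_zero _ hc) hj (by omega)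
    _ = {y : G | y ^ l = c}.ncard := by
      rw [← pow_mul, ncard_setOf_pow_eq_pow_mod hc, hnj, pow_one]

lemma ncard_setOf_pow_eq_pow_mul_pow [Finite G] {m s : ℕ} (hl : l.Prime)
    (hm : 1 ≤ m) (hs : 1 ≤ s) (hms : m + s = l) (a b : G) :
    {y : G | y ^ l = a ^ m * b ^ s}.ncard = {y : G | y ^ l = a / b}.ncard := by
  rcases eq_or_ne b 0 with rfl | hb
  · rw [zero_pow (by omega), mul_zero, div_zero]
  rcases eq_or_ne a 0 with rfl | ha
  · rw [zero_pow (by omega), zero_mul, zero_div]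
  have hfactor : a ^ m * b ^ s = (a / b) ^ m * b ^ l := by
    rw [← hms, div_pow, pow_add, div_mul_eq_mul_div, mul_div_assoc,
      mul_div_cancel_left₀ _ (pow_ne_zero _ hb)]
  have hcop : m.Coprime l :=
    Nat.coprime_comm.mp <| hl.coprime_iff_not_dvd.mpr (Nat.not_dvd_of_pos_of_lt hm (by omega))
  rw [hfactor, ncard_setOf_pow_eq_mul_pow _ hb,
    ncard_setOf_pow_eq_pow_of_coprime (div_ne_zero ha hb) hcop hl.one_lt]

end RootCount

theorem curves_same_point_count_general (l : ℕ) (hl : l.Prime) (m m' s s' : ℕ)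
    (hm : 1 ≤ m) (hm' : 1 ≤ m') (hs : 1 ≤ s) (hs' : 1 ≤ s')
    (hms : m + s = l) (hm's' : m' + s' = l)
    (K : Type*) [Field K] [Fintype K] (z : K) :
    (1 + ∑ t : K, {y : K | y ^ l = t ^ m * (1 - t) ^ s * (1 - z * t) ^ m}.ncard) =
      (1 + ∑ t : K, {y : K | y ^ l = t ^ m' * (1 - t) ^ s' * (1 - z * t) ^ m'}.ncard) := by
  have hfibre : ∀ {n r : ℕ}, 1 ≤ n → 1 ≤ r → n + r = l → ∀ t : K,
      {y : K | y ^ l = t ^ n * (1 - t) ^ r * (1 - z * t) ^ n}.ncard =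
        {y : K | y ^ l = t * (1 - z * t) / (1 - t)}.ncard := fun hn hr hnr t => by
    rw [← ncard_setOf_pow_eq_pow_mul_pow hl hn hr hnr, mul_pow, mul_right_comm]
  simp only [hfibre hm hs hms, hfibre hm' hs' hm's']

/-- Let `l` be an odd prime and `p` a prime with `p ≡ 1 (mod l)`. Let
`m, m', s, s'` be integers with `1 ≤ m, m', s, s' < l`, `m + s = l`, `m' + s' = l`. For any
finite field `K` with `p^k` elements (`k ≥ 1`) and `z ∈ K` lying in the base field `F_p`
(i.e. `z^p = z`) with `z ≠ 0, 1`, the curves `y^l = t^m (1-t)^s (1-zt)^m` and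
`y^l = t^{m'} (1-t)^{s'} (1-zt)^{m'}` have the same number of projective points over `K`
(affine points plus the point at infinity). -/
theorem curves_same_point_count (l p : ℕ) (hl : l.Prime) (hlodd : Odd l) (hp : p.Prime)
    (hcong : p % l = 1) (m m' s s' : ℕ)
    (hm : 1 ≤ m) (hm' : 1 ≤ m') (hs : 1 ≤ s) (hs' : 1 ≤ s')
    (hml : m < l) (hm'l : m' < l) (hsl : s < l) (hs'l : s' < l)
    (hms : m + s = l) (hm's' : m' + s' = l)
    (k : ℕ) (hk : 0 < k) (K : Type*) [Field K] [Fintype K]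
    (hK : Fintype.card K = p ^ k) (z : K) (hzF : z ^ p = z) (hz0 : z ≠ 0) (hz1 : z ≠ 1) :
    (1 + ∑ t : K, {y : K | y ^ l = t ^ m * (1 - t) ^ s * (1 - z * t) ^ m}.ncard) =
      (1 + ∑ t : K, {y : K | y ^ l = t ^ m' * (1 - t) ^ s' * (1 - z * t) ^ m'}.ncard) :=
  curves_same_point_count_general l hl m m' s s' hm hm' hs hs' hms hm's' K z
end

section
/- Over a field of characteristic not 2 or 3 containing z with z ≠ 0, the curve y^3 = t(1-t)^2(1-zt) is birationally equivalent to the curve Y^2 = X^6 + 2(1-2z)X^3 + 1. -/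
open MvPolynomial

/-- Two affine plane curves `C₁`, `C₂` over a field `K` are birationally equivalent if there
are rational maps (given componentwise by ratios of two-variable polynomials) in both
directions, defined away from finitely many points of the curves, mapping one curve into the
other and inverse to each other where defined. -/
def IsBirationallyEquivalent (K : Type*) [Field K] (C₁ C₂ : K → K → Prop) : Prop :=
  ∃ (p₁ q₁ p₂ q₂ u₁ v₁ u₂ v₂ : MvPolynomial (Fin 2) K) (E₁ E₂ : Set (K × K)),
    E₁.Finite ∧ E₂.Finite ∧
    (∀ x y : K, C₁ x y → (x, y) ∉ E₁ →
      eval ![x, y] q₁ ≠ 0 ∧ eval ![x, y] q₂ ≠ 0 ∧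
      C₂ (eval ![x, y] p₁ / eval ![x, y] q₁) (eval ![x, y] p₂ / eval ![x, y] q₂)) ∧
    (∀ x y : K, C₂ x y → (x, y) ∉ E₂ →
      eval ![x, y] v₁ ≠ 0 ∧ eval ![x, y] v₂ ≠ 0 ∧
      C₁ (eval ![x, y] u₁ / eval ![x, y] v₁) (eval ![x, y] u₂ / eval ![x, y] v₂)) ∧
    (∀ x y : K, C₁ x y → (x, y) ∉ E₁ →
      ∀ x' y' : K, x' = eval ![x, y] p₁ / eval ![x, y] q₁ →
        y' = eval ![x, y] p₂ / eval ![x, y] q₂ → (x', y') ∉ E₂ →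
        eval ![x', y'] u₁ / eval ![x', y'] v₁ = x ∧
        eval ![x', y'] u₂ / eval ![x', y'] v₂ = y) ∧
    (∀ x y : K, C₂ x y → (x, y) ∉ E₂ →
      ∀ x' y' : K, x' = eval ![x, y] u₁ / eval ![x, y] v₁ →
        y' = eval ![x, y] u₂ / eval ![x, y] v₂ → (x', y') ∉ E₁ →
        eval ![x', y'] p₁ / eval ![x', y'] q₁ = x ∧
        eval ![x', y'] p₂ / eval ![x', y'] q₂ = y)

/-!
Substituting `y = (1 - t) / X` turns the cubic curve, away from `t = 1`, into the relation
`X³ t (1 - z t) = 1 - t`, i.e. `z X³ t² - (X³ + 1) t + 1 = 0`: a quadratic in `t` with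
discriminant `X⁶ + 2(1 - 2z)X³ + 1`. Completing the square, `Y = 2 z X³ t - X³ - 1`, turns the
relation into the sextic curve. So the points with `y ≠ 0` of the cubic and those with `X ≠ 0`
of the sextic are both parametrized by the solutions `(X, t)` of the relation, as
`(t, (1 - t) / X)` and `(X, 2 z X³ t - X³ - 1)`, and the maps
`(t, y) ↦ ((1 - t) / y, (2 z t - z t² - 1) / (t - z t²))` and
`(X, Y) ↦ ((X³ + 1 + Y) / (2 z X³), ((2 z - 1) X³ - 1 - Y) / (2 z X⁴))` match the two
parametrizations.
-/

section

variable {K : Type*} [Field K] {z t y X Y : K}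

theorem ne_zero_of_cubic_of_notMem (hC : y ^ 3 = t * (1 - t) ^ 2 * (1 - z * t))
    (hE : (t, y) ∉ ({(0, 0), (1, 0), (z⁻¹, 0)} : Set (K × K))) : y ≠ 0 := by
  rintro rfl
  simp only [Set.mem_insert_iff, Set.mem_singleton_iff, Prod.mk.injEq, and_true,
    not_or] at hE
  obtain ⟨ht0, ht1, htz⟩ := hE
  have h1zt : 1 - z * t ≠ 0 :=
    sub_ne_zero.2 fun h ↦ htz (eq_inv_of_mul_eq_one_right h.symm)
  refine mul_ne_zero (mul_ne_zero ht0 (pow_ne_zero 2 (sub_ne_zero.2 (Ne.symm ht1)))) h1zt ?_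
  rw [← hC, zero_pow three_ne_zero]

theorem ne_zero_of_sextic_of_notMem (hC : Y ^ 2 = X ^ 6 + 2 * (1 - 2 * z) * X ^ 3 + 1)
    (hE : (X, Y) ∉ ({(0, 1), (0, -1)} : Set (K × K))) : X ≠ 0 := by
  rintro rfl
  have hY : Y ^ 2 = 1 := by simpa using hC
  simp_all [sq_eq_one_iff]

theorem exists_relation_of_cubic (hC : y ^ 3 = t * (1 - t) ^ 2 * (1 - z * t))
    (hE : (t, y) ∉ ({(0, 0), (1, 0), (z⁻¹, 0)} : Set (K × K))) :
    ∃ X, X ≠ 0 ∧ t ≠ 1 ∧ X ^ 3 * (t * (1 - z * t)) = 1 - t ∧ y = (1 - t) / X := by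
  have hy := ne_zero_of_cubic_of_notMem hC hE
  have hprod : t * (1 - t) ^ 2 * (1 - z * t) ≠ 0 := hC ▸ pow_ne_zero 3 hy
  have h1t : 1 - t ≠ 0 := by
    intro h
    simp [h] at hprod
  refine ⟨(1 - t) / y, div_ne_zero h1t hy, fun h ↦ h1t (sub_eq_zero.2 h.symm), ?_,
    (div_div_cancel₀ h1t).symm⟩
  rw [div_pow, div_mul_eq_mul_div, div_eq_iff (pow_ne_zero 3 hy)]
  linear_combination (t - 1) * hC

theorem cubic_of_relation (hX : X ≠ 0) (h : X ^ 3 * (t * (1 - z * t)) = 1 - t) :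
    ((1 - t) / X) ^ 3 = t * (1 - t) ^ 2 * (1 - z * t) := by
  rw [div_pow, div_eq_iff (pow_ne_zero 3 hX)]
  linear_combination (-(1 - t) ^ 2) * h

theorem sextic_of_relation (h : X ^ 3 * (t * (1 - z * t)) = 1 - t) :
    (2 * z * X ^ 3 * t - X ^ 3 - 1) ^ 2 = X ^ 6 + 2 * (1 - 2 * z) * X ^ 3 + 1 := by
  linear_combination (-4 * z * X ^ 3) * h

theorem relation_of_sextic (h2 : (2 : K) ≠ 0) (hz : z ≠ 0) (hX : X ≠ 0)
    (h : (2 * z * X ^ 3 * t - X ^ 3 - 1) ^ 2 = X ^ 6 + 2 * (1 - 2 * z) * X ^ 3 + 1) :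
    X ^ 3 * (t * (1 - z * t)) = 1 - t := by
  have hd : -4 * z * X ^ 3 ≠ 0 := by simp [show (4 : K) = 2 * 2 by norm_num, h2, hz, hX]
  apply mul_left_cancel₀ hd
  linear_combination h

theorem exists_relation_of_sextic (h2 : (2 : K) ≠ 0) (hz : z ≠ 0)
    (hC : Y ^ 2 = X ^ 6 + 2 * (1 - 2 * z) * X ^ 3 + 1)
    (hE : (X, Y) ∉ ({(0, 1), (0, -1)} : Set (K × K))) :
    X ≠ 0 ∧ ∃ t, X ^ 3 * (t * (1 - z * t)) = 1 - t ∧ Y = 2 * z * X ^ 3 * t - X ^ 3 - 1 := by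
  have hX := ne_zero_of_sextic_of_notMem hC hE
  obtain ⟨t, rfl⟩ : ∃ t, Y = 2 * z * X ^ 3 * t - X ^ 3 - 1 :=
    ⟨(X ^ 3 + 1 + Y) / (2 * z * X ^ 3), by field_simp; ring⟩
  exact ⟨hX, t, relation_of_sextic h2 hz hX hC, rfl⟩

theorem sub_mul_sq_ne_zero_of_relation (ht : t ≠ 1) (h : X ^ 3 * (t * (1 - z * t)) = 1 - t) :
    t - z * t ^ 2 ≠ 0 := by
  have : X ^ 3 * (t - z * t ^ 2) ≠ 0 := by
    rw [show t - z * t ^ 2 = t * (1 - z * t) by ring, h]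
    exact sub_ne_zero.2 ht.symm
  exact right_ne_zero_of_mul this

theorem cubicToSextic_apply (ht : t ≠ 1) (h : X ^ 3 * (t * (1 - z * t)) = 1 - t) :
    (1 - t) / ((1 - t) / X) = X ∧
      (2 * z * t - z * t ^ 2 - 1) / (t - z * t ^ 2) = 2 * z * X ^ 3 * t - X ^ 3 - 1 := by
  refine ⟨div_div_cancel₀ (sub_ne_zero.2 ht.symm), ?_⟩
  rw [div_eq_iff (sub_mul_sq_ne_zero_of_relation ht h)]
  linear_combination (1 - 2 * z * t) * h

theorem sexticToCubic_apply (h2 : (2 : K) ≠ 0) (hz : z ≠ 0) (hX : X ≠ 0) :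
    (X ^ 3 + 1 + (2 * z * X ^ 3 * t - X ^ 3 - 1)) / (2 * z * X ^ 3) = t ∧
      ((2 * z - 1) * X ^ 3 - 1 - (2 * z * X ^ 3 * t - X ^ 3 - 1)) / (2 * z * X ^ 4) =
        (1 - t) / X := by
  constructor <;> field_simp <;> ring

end

theorem curve_birational_to_sextic_general {K : Type*} [Field K]
    (h2 : (2 : K) ≠ 0) (z : K) (hz : z ≠ 0) :
    IsBirationallyEquivalent K
      (fun t y => y ^ 3 = t * (1 - t) ^ 2 * (1 - z * t))
      (fun X Y => Y ^ 2 = X ^ 6 + 2 * (1 - 2 * z) * X ^ 3 + 1) := by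
  have h2z (n : ℕ) {X : K} (hX : X ≠ 0) : 2 * z * X ^ n ≠ 0 := by simp [h2, hz, hX]
  refine ⟨1 - X 0, X 1, C (2 * z) * X 0 - C z * X 0 ^ 2 - 1, X 0 - C z * X 0 ^ 2,
    X 0 ^ 3 + 1 + X 1, C (2 * z) * X 0 ^ 3, C (2 * z - 1) * X 0 ^ 3 - 1 - X 1, C (2 * z) * X 0 ^ 4,
    {(0, 0), (1, 0), (z⁻¹, 0)}, {(0, 1), (0, -1)}, Set.toFinite _, Set.toFinite _,
    ?_, ?_, ?_, ?_⟩ <;>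
  simp only [map_sub, map_add, map_mul, map_pow, map_one, eval_C, eval_X,
    Matrix.cons_val_zero, Matrix.cons_val_one]
  · intro t y hC hE
    obtain ⟨X, hX, ht, hR, rfl⟩ := exists_relation_of_cubic hC hE
    refine ⟨div_ne_zero (sub_ne_zero.2 ht.symm) hX, sub_mul_sq_ne_zero_of_relation ht hR, ?_⟩
    obtain ⟨hx', hy'⟩ := cubicToSextic_apply ht hR
    rw [hx', hy']
    exact sextic_of_relation hR
  · intro X Y hC hE
    obtain ⟨hX, t, hR, rfl⟩ := exists_relation_of_sextic h2 hz hC hE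
    refine ⟨h2z 3 hX, h2z 4 hX, ?_⟩
    obtain ⟨ht', hy'⟩ := sexticToCubic_apply (t := t) h2 hz hX
    rw [ht', hy']
    exact cubic_of_relation hX hR
  · rintro t y hC hE _ _ rfl rfl -
    obtain ⟨X, hX, ht, hR, rfl⟩ := exists_relation_of_cubic hC hE
    obtain ⟨hx', hy'⟩ := cubicToSextic_apply ht hR
    rw [hx', hy']
    exact sexticToCubic_apply h2 hz hX
  · rintro X Y hC hE _ _ rfl rfl hE'
    obtain ⟨hX, t, hR, rfl⟩ := exists_relation_of_sextic h2 hz hC hE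
    obtain ⟨ht', hy'⟩ := sexticToCubic_apply (t := t) h2 hz hX
    rw [ht', hy'] at hE' ⊢
    obtain ⟨-, -, ht, -⟩ := exists_relation_of_cubic (cubic_of_relation hX hR) hE'
    exact cubicToSextic_apply ht hR

/-- Over a field of characteristic not `2` or `3` containing `z ≠ 0`, the curve
`y³ = t(1-t)²(1-zt)` is birationally equivalent to the curve `Y² = X⁶ + 2(1-2z)X³ + 1`. -/
theorem curve_birational_to_sextic {K : Type*} [Field K]
    (h2 : (2 : K) ≠ 0) (h3 : (3 : K) ≠ 0) (z : K) (hz : z ≠ 0) :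
    IsBirationallyEquivalent K
      (fun t y => y ^ 3 = t * (1 - t) ^ 2 * (1 - z * t))
      (fun X Y => Y ^ 2 = X ^ 6 + 2 * (1 - 2 * z) * X ^ 3 + 1) :=
  curve_birational_to_sextic_general h2 z hz
end

section
/- Let q ≡ 1 (mod 5) be prime, z ∈ F_q with z ≠ 0,1, and η a multiplicative character of F_q^× of order 5. Then Σ_{s ∈ F_q^×} η^4(s) · Σ_{b ∈ F_q} η(1-b+s)·η^4(1-bz+z^2 s) = q. -/
open scoped Classical

/-!
Since `η ^ 4 = η⁻¹`, the inner sum is `∑_b η((1 - b + s) / (1 - b z + z² s))`, a character sum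
along the fractional linear map `b ↦ (1 - b + s) / (1 - b z + z² s)` of determinant
`(z - 1)(1 - z s)`. For `s ≠ z⁻¹` this map is a bijection from `F` minus its pole onto `F` minus
`z⁻¹`, so orthogonality gives the inner sum `-η(z⁻¹)`; for `s = z⁻¹` the map is constant `z⁻¹`
off its pole and the inner sum is `(q - 1) η(z⁻¹)`. Summing against `η⁻¹(s)`, orthogonality
kills the constant `-η(z⁻¹)` and only `q η⁻¹(z⁻¹) η(z⁻¹) = q` survives.
-/

open Finset

namespace MulChar

theorem apply_div {F R : Type*} [Field F] [CommMonoidWithZero R] (χ : MulChar F R) (x y : F) :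
    χ (x / y) = χ x * χ⁻¹ y := by
  rw [div_eq_mul_inv, map_mul, inv_apply']

variable {F R : Type*} [Field F] [Fintype F] [CommRing R]

/-- Substitute `u = c x + d`. The correction `χ (a / c)` comes from the pole `u = 0`, where
`0⁻¹ = 0` makes the new summand `χ (a / c)` while the old one is `χ (_ / 0) = χ 0 = 0`. -/
theorem sum_apply_div_affine (χ : MulChar F R) (a b : F) {c : F} (d : F) (hc : c ≠ 0) :
    ∑ x, χ ((a * x + b) / (c * x + d)) =
      ∑ u, χ ((a + (b * c - a * d) * u⁻¹) / c) - χ (a / c) := by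
  set g : F → R := fun u ↦ χ ((a + (b * c - a * d) * u⁻¹) / c) - if u = 0 then χ (a / c) else 0
  have hsubst : ∀ x, χ ((a * x + b) / (c * x + d)) = g (c * x + d) := by
    intro x
    by_cases hx : c * x + d = 0
    · simp [g, hx]
    · simp only [g, if_neg hx, sub_zero]
      rw [mul_comm c x] at hx ⊢
      congr 1
      field_simp
      ring
  have hbij : Function.Bijective fun x : F ↦ c * x + d :=
    Finite.injective_iff_bijective.mp ((add_left_injective d).comp (mul_right_injective₀ hc))
  rw [sum_congr rfl fun x _ ↦ hsubst x, hbij.sum_comp g, sum_sub_distrib, sum_ite_eq' univ,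
    if_pos (mem_univ _)]

theorem sum_apply_div_affine_of_det_ne_zero [IsDomain R] {χ : MulChar F R} (hχ : χ ≠ 1)
    {a b c d : F} (hc : c ≠ 0) (hdet : a * d - b * c ≠ 0) :
    ∑ x, χ ((a * x + b) / (c * x + d)) = -χ (a / c) := by
  have hD : b * c - a * d ≠ 0 := by rwa [← neg_sub, neg_ne_zero]
  have hbij : Function.Bijective fun u : F ↦ (a + (b * c - a * d) * u⁻¹) / c := by
    refine Finite.injective_iff_bijective.mp fun u v huv ↦ ?_
    simpa [hc, hD] using huv
  rw [sum_apply_div_affine χ a b d hc, hbij.sum_comp χ, sum_eq_zero_of_ne_one hχ, zero_sub]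

theorem sum_apply_div_affine_of_det_eq_zero (χ : MulChar F R) {a b c d : F} (hc : c ≠ 0)
    (hdet : a * d - b * c = 0) :
    ∑ x, χ ((a * x + b) / (c * x + d)) = (Fintype.card F - 1) * χ (a / c) := by
  rw [sum_apply_div_affine χ a b d hc, show b * c - a * d = 0 by linear_combination -hdet]
  simp [sub_one_mul]

end MulChar

open MulChar

theorem sum_apply_mul_inv_apply_eq {F R : Type*} [Field F] [Fintype F] [CommRing R]
    [IsDomain R] {η : MulChar F R} (hη : η ≠ 1) {z : F} (hz0 : z ≠ 0) (hz1 : z ≠ 1) (s : F) :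
    ∑ b, η (1 - b + s) * η⁻¹ (1 - b * z + z ^ 2 * s) =
      Fintype.card F * (if s = z⁻¹ then η z⁻¹ else 0) - η z⁻¹ := by
  have hform : ∀ b, η (1 - b + s) * η⁻¹ (1 - b * z + z ^ 2 * s) =
      η ((-1 * b + (1 + s)) / (-z * b + (1 + z ^ 2 * s))) := fun b ↦ by
    rw [apply_div]; ring_nf
  have hratio : -1 / -z = z⁻¹ := by rw [neg_div_neg_eq, one_div]
  have hdet : -1 * (1 + z ^ 2 * s) - (1 + s) * -z = (z - 1) * (1 - z * s) := by ring
  simp only [hform]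
  split_ifs with hs
  · rw [sum_apply_div_affine_of_det_eq_zero η (neg_ne_zero.mpr hz0), hratio]
    · ring
    · rw [hdet, hs, mul_inv_cancel₀ hz0, sub_self, mul_zero]
  · rw [sum_apply_div_affine_of_det_ne_zero hη (neg_ne_zero.mpr hz0), hratio]
    · ring
    · rw [hdet]
      refine mul_ne_zero (sub_ne_zero.mpr hz1) fun h ↦ hs ?_
      exact eq_inv_of_mul_eq_one_left (by linear_combination -h)

theorem double_char_sum_eq_q_general {F : Type*} [Field F] [Fintype F]
    (z : F) (hz0 : z ≠ 0) (hz1 : z ≠ 1) (η : MulChar F ℂ) (hη : orderOf η = 5) :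
    ∑ s ∈ Finset.univ.filter (· ≠ (0 : F)), (η ^ 4) s *
        ∑ b : F, η (1 - b + s) * (η ^ 4) (1 - b * z + z ^ 2 * s) =
      (Fintype.card F : ℂ) := by
  have hη4 : η ^ 4 = η⁻¹ := eq_inv_of_mul_eq_one_left <| by
    rw [← pow_succ, show 4 + 1 = orderOf η by rw [hη], pow_orderOf_eq_one]
  have hη1 : η ≠ 1 := by rintro rfl; simp at hη
  have hunit : η⁻¹ z⁻¹ * η z⁻¹ = 1 := by
    rw [inv_apply', inv_inv, ← map_mul, mul_inv_cancel₀ hz0, map_one]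
  rw [hη4, sum_filter_of_ne fun s _ h ↦ by rintro rfl; simp at h]
  simp only [sum_apply_mul_inv_apply_eq hη1 hz0 hz1, mul_sub, sum_sub_distrib, mul_ite, mul_zero]
  rw [sum_ite_eq' univ, if_pos (mem_univ _), ← sum_mul, sum_eq_zero_of_ne_one (inv_ne_one.mpr hη1)]
  linear_combination (Fintype.card F : ℂ) * hunit

/-- Let `F` be the field with `q` elements, `q` prime with `q ≡ 1 (mod 5)`,
`z ∈ F` with `z ≠ 0, 1`, and `η` a multiplicative character of `F` of order `5` (extended by
`η 0 = 0`). Then `Σ_{s ∈ F^×} η⁴(s) · Σ_{b ∈ F} η(1-b+s)·η⁴(1-bz+z²s) = q`. -/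
theorem double_char_sum_eq_q {F : Type*} [Field F] [Fintype F]
    (hq : (Fintype.card F).Prime) (h5 : Fintype.card F % 5 = 1)
    (z : F) (hz0 : z ≠ 0) (hz1 : z ≠ 1) (η : MulChar F ℂ) (hη : orderOf η = 5) :
    ∑ s ∈ Finset.univ.filter (· ≠ (0 : F)), (η ^ 4) s *
        ∑ b : F, η (1 - b + s) * (η ^ 4) (1 - b * z + z ^ 2 * s) =
      (Fintype.card F : ℂ) :=
  double_char_sum_eq_q_general z hz0 hz1 η hη
end

section
/- Let q be an odd prime power, s ∈ F_q^× a non-square, and define h: F_{q^2}^× → F_{q^2} by h(t) = t + s/t. Then the restriction of h to F_q^× is a 2-to-1 surjection onto its image in F_q, the restriction of h to N^{-1}(s) = {α ∈ F_{q^2} : α^{q+1} = s} is a 2-to-1 map onto its image in F_q (since h(α) = α + α^q = Tr(α) ∈ F_q for α ∈ N^{-1}(s)), and every b ∈ F_q is attained by exactly one of these two restrictions; i.e., F_q is the disjoint union of h(F_q^×) and h(N^{-1}(s)). -/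
section Aux

variable {F K : Type*} [Field F] [Fintype F] [Field K] [Fintype K] [Algebra F K]

/-- The image of `F` in `K` is exactly the fixed set of the `q`-power Frobenius. -/
lemma aux_range_eq (hK : Fintype.card K = Fintype.card F ^ 2) :
    Set.range (algebraMap F K) = {x : K | x ^ Fintype.card F = x} := by
  classical
  have hq1 : 1 < Fintype.card F := Fintype.one_lt_card
  have hinj : Function.Injective (algebraMap F K) := (algebraMap F K).injective
  have hsub : Set.range (algebraMap F K) ⊆ {x : K | x ^ Fintype.card F = x} := by
    rintro x ⟨a, rfl⟩
    show (algebraMap F K a) ^ Fintype.card F = algebraMap F K a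
    rw [← map_pow, FiniteField.pow_card]
  refine Set.eq_of_subset_of_ncard_le hsub ?_ (Set.toFinite _)
  have h1 : (Set.range (algebraMap F K)).ncard = Fintype.card F := by
    rw [← Set.image_univ, Set.ncard_image_of_injective _ hinj, Set.ncard_univ,
      Nat.card_eq_fintype_card]
  rw [h1]
  have hfne : (Polynomial.X ^ Fintype.card F - Polynomial.X : Polynomial K) ≠ 0 :=
    FiniteField.X_pow_card_sub_X_ne_zero K hq1
  have hsub2 : {x : K | x ^ Fintype.card F = x} ⊆
      ((Polynomial.X ^ Fintype.card F - Polynomial.X : Polynomial K).roots.toFinset : Set K) := by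
    intro x hx
    simp only [Set.mem_setOf_eq] at hx
    simp only [Finset.coe_sort_coe, Multiset.mem_toFinset, Finset.mem_coe,
      Polynomial.mem_roots hfne, Polynomial.IsRoot.def, Polynomial.eval_sub,
      Polynomial.eval_pow, Polynomial.eval_X]
    rw [hx, sub_self]
  calc ({x : K | x ^ Fintype.card F = x}).ncard
      ≤ ((Polynomial.X ^ Fintype.card F - Polynomial.X : Polynomial K).roots.toFinset :
          Set K).ncard := Set.ncard_le_ncard hsub2 (Set.toFinite _)
    _ = (Polynomial.X ^ Fintype.card F - Polynomial.X : Polynomial K).roots.toFinset.card := by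
        rw [Set.ncard_coe_finset]
    _ ≤ Multiset.card (Polynomial.X ^ Fintype.card F - Polynomial.X : Polynomial K).roots :=
        Multiset.toFinset_card_le _
    _ ≤ (Polynomial.X ^ Fintype.card F - Polynomial.X : Polynomial K).natDegree :=
        Polynomial.card_roots' _
    _ = Fintype.card F := FiniteField.X_pow_card_sub_X_natDegree_eq K hq1

/-- The `q`-power Frobenius is additive on `K`. -/
lemma aux_frob_add (x y : K) :
    (x + y) ^ Fintype.card F = x ^ Fintype.card F + y ^ Fintype.card F := by
  obtain ⟨n, hp, hcard⟩ := FiniteField.card F (ringChar F)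
  haveI : Fact (ringChar F).Prime := ⟨hp⟩
  haveI : CharP K (ringChar F) :=
    charP_of_injective_algebraMap (algebraMap F K).injective (ringChar F)
  rw [hcard, add_pow_char_pow]

/-- Every nonzero element of `F` becomes a square in `K`. -/
lemma aux_square (hK : Fintype.card K = Fintype.card F ^ 2)
    (hodd : Odd (Fintype.card F)) {a : F} (ha : a ≠ 0) :
    ∃ e : K, e ^ 2 = algebraMap F K a := by
  have hKodd : Odd (Fintype.card K) := by rw [hK]; exact hodd.pow
  have hchar : ringChar K ≠ 2 := by
    intro h2
    have h3 := FiniteField.even_card_of_char_two h2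
    rw [Nat.odd_iff] at hKodd
    omega
  have ha' : algebraMap F K a ≠ 0 := (map_ne_zero _).mpr ha
  have hdiv : Fintype.card K / 2 = (Fintype.card F - 1) * ((Fintype.card F + 1) / 2) := by
    obtain ⟨k, hk⟩ := hodd
    rw [hK, hk]
    have h1 : (2 * k + 1) ^ 2 = 4 * (k * k) + 4 * k + 1 := by ring
    have e1 : 2 * k + 1 - 1 = 2 * k := by omega
    have e2 : (2 * k + 1 + 1) / 2 = k + 1 := by omega
    have e3 : 2 * k * (k + 1) = 2 * (k * k) + 2 * k := by ring
    rw [h1, e1, e2, e3]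
    omega
  have hpow : (algebraMap F K a) ^ (Fintype.card K / 2) = 1 := by
    rw [hdiv, pow_mul, ← map_pow, FiniteField.pow_card_sub_one_eq_one a ha, map_one, one_pow]
  obtain ⟨e, he⟩ := (FiniteField.isSquare_iff hchar ha').mpr hpow
  exact ⟨e, by rw [sq]; exact he.symm⟩

end Aux

/-- Let `F` be a finite field with `q` elements, `q` odd, `K` its quadratic
extension (a field extension with `q²` elements), and `s ∈ F` a nonzero non-square. Define
`h : K → K` by `h t = t + s/t`. Identify `F` with its image in `K`. Then:
the restriction of `h` to `F^× ⊆ K` takes values in `F` and is exactly 2-to-1 onto its image;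
the restriction of `h` to `N⁻¹(s) = {α : α^(q+1) = s}` takes values in `F` and is exactly
2-to-1 onto its image; and `F` is the disjoint union of these two images. -/
theorem norm_trace_partition {F K : Type*} [Field F] [Fintype F] [Field K] [Fintype K]
    [Algebra F K] (hK : Fintype.card K = Fintype.card F ^ 2)
    (hodd : Odd (Fintype.card F))
    (s : F) (hs0 : s ≠ 0) (hs : ¬ ∃ u : F, u ^ 2 = s)
    (h : K → K) (hh : ∀ t : K, h t = t + algebraMap F K s / t) :
    (∀ t ∈ Set.range (algebraMap F K) \ {0}, h t ∈ Set.range (algebraMap F K)) ∧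
    (∀ b ∈ h '' (Set.range (algebraMap F K) \ {0}),
      {t | t ∈ Set.range (algebraMap F K) \ {0} ∧ h t = b}.ncard = 2) ∧
    (∀ α ∈ {α : K | α ^ (Fintype.card F + 1) = algebraMap F K s},
      h α ∈ Set.range (algebraMap F K)) ∧
    (∀ b ∈ h '' {α : K | α ^ (Fintype.card F + 1) = algebraMap F K s},
      {α | α ∈ {α : K | α ^ (Fintype.card F + 1) = algebraMap F K s} ∧ h α = b}.ncard = 2) ∧
    (h '' (Set.range (algebraMap F K) \ {0}) ∪
        h '' {α : K | α ^ (Fintype.card F + 1) = algebraMap F K s} =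
      Set.range (algebraMap F K)) ∧
    Disjoint (h '' (Set.range (algebraMap F K) \ {0}))
      (h '' {α : K | α ^ (Fintype.card F + 1) = algebraMap F K s}) := by
  classical
  set q := Fintype.card F with hq
  set φ := algebraMap F K with hφ
  have hinj : Function.Injective φ := (algebraMap F K).injective
  have hφs0 : φ s ≠ 0 := (map_ne_zero _).mpr hs0
  have hFfix : ∀ a : F, a ^ q = a := fun a => FiniteField.pow_card a
  have hKfix : ∀ x : K, x ^ (q * q) = x := by
    intro x
    have := FiniteField.pow_card x
    rwa [hK, pow_two] at this
  have hrange : Set.range ⇑φ = {x : K | x ^ q = x} := aux_range_eq (F := F) (K := K) hK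
  have hfrob : ∀ x y : K, (x + y) ^ q = x ^ q + y ^ q := fun x y =>
    aux_frob_add (F := F) (K := K) x y
  have h2K : (2 : K) ≠ 0 := by
    intro h2
    have hKodd : Odd (Fintype.card K) := by rw [hK]; exact hodd.pow
    have hprime : (ringChar K).Prime := by
      obtain ⟨n, hp, hcard⟩ := FiniteField.card K (ringChar K)
      exact hp
    have hdvd : ringChar K ∣ 2 := by
      rw [← CharP.cast_eq_zero_iff K (ringChar K) 2]
      exact_mod_cast h2
    have hc2 : ringChar K = 2 := (Nat.prime_dvd_prime_iff_eq hprime Nat.prime_two).mp hdvd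
    have h3 := FiniteField.even_card_of_char_two hc2
    rw [Nat.odd_iff] at hKodd
    omega
  have h2F : (2 : F) ≠ 0 := by
    intro h2
    apply h2K
    have h4 : (2 : K) = φ (2 : F) := (map_ofNat φ 2).symm
    rw [h4, h2, map_zero]
  -- roots of the quadratic x^2 - b x + φ s
  have hquad : ∀ (b t t' x : K), t * t' = φ s → t + t' = b → x ≠ 0 → h x = b →
      x = t ∨ x = t' := by
    intro b t t' x hprod hsum hx0 hxb
    rw [hh] at hxb
    have hx : x * x - b * x + φ s = 0 := by
      field_simp at hxb
      linear_combination hxb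
    have : (x - t) * (x - t') = 0 := by linear_combination hx + hprod - x * hsum
    rcases mul_eq_zero.mp this with h1 | h1
    · exact Or.inl (sub_eq_zero.mp h1)
    · exact Or.inr (sub_eq_zero.mp h1)
  have hval : ∀ t t' : K, t ≠ 0 → t * t' = φ s → h t = t + t' := by
    intro t t' ht0 hprod
    rw [hh]
    congr 1
    field_simp
    linear_combination -hprod
  -- part 1
  have part1 : ∀ t ∈ Set.range ⇑φ \ {0}, h t ∈ Set.range ⇑φ := by
    rintro t ⟨⟨a, rfl⟩, ht0⟩
    refine ⟨a + s / a, ?_⟩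
    rw [hh, map_add, map_div₀]
  -- part 3
  have hnorm_ne : ∀ α : K, α ^ (q + 1) = φ s → α ≠ 0 := by
    intro α hα hc
    rw [hc, zero_pow (by omega)] at hα
    exact hφs0 hα.symm
  have hnorm_q : ∀ α : K, α ^ (q + 1) = φ s → φ s / α = α ^ q := by
    intro α hα
    have h0 := hnorm_ne α hα
    rw [div_eq_iff h0, ← pow_succ, hα]
  have part3 : ∀ α ∈ {α : K | α ^ (q + 1) = φ s}, h α ∈ Set.range ⇑φ := by
    intro α hα
    rw [hrange]
    rw [hh, hnorm_q α hα]
    show (α + α ^ q) ^ q = _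
    rw [hfrob, ← pow_mul, hKfix, add_comm]
  -- generic fiber computation
  have fiber : ∀ (S : Set K) (b t t' : K), t ∈ S → t' ∈ S → t ≠ t' → t * t' = φ s →
      t + t' = b → (∀ x ∈ S, x ≠ 0) → h t = b → h t' = b →
      {x | x ∈ S ∧ h x = b}.ncard = 2 := by
    intro S b t t' htS ht'S hne hprod hsum hS0 htb ht'b
    have hset : {x | x ∈ S ∧ h x = b} = {t, t'} := by
      ext x
      constructor
      · rintro ⟨hxS, hxb⟩
        exact hquad b t t' x hprod hsum (hS0 x hxS) hxb
      · rintro (rfl | rfl)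
        · exact ⟨htS, htb⟩
        · exact ⟨ht'S, ht'b⟩
    rw [hset, Set.ncard_pair hne]
  -- part 2
  have part2 : ∀ b ∈ h '' (Set.range ⇑φ \ {0}),
      {x | x ∈ Set.range ⇑φ \ {0} ∧ h x = b}.ncard = 2 := by
    rintro b ⟨t, ⟨⟨a, rfl⟩, ht0'⟩, rfl⟩
    have ha0 : a ≠ 0 := fun hc => ht0' (by simp [hc])
    have ht0 : φ a ≠ 0 := (map_ne_zero _).mpr ha0
    set t' : K := φ (s / a) with ht'
    have ht'0 : t' ≠ 0 := (map_ne_zero _).mpr (div_ne_zero hs0 ha0)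
    have hprod : φ a * t' = φ s := by rw [ht', ← map_mul]; congr 1; field_simp
    have hne : φ a ≠ t' := by
      intro hc
      apply hs
      refine ⟨a, hinj ?_⟩
      rw [map_pow, sq, ← hprod, hc]
    have hsum : φ a + t' = h (φ a) := (hval (φ a) t' ht0 hprod).symm
    have ht'b : h t' = h (φ a) := by
      rw [hval t' (φ a) ht'0 (by rw [mul_comm]; exact hprod), ← hsum, add_comm]
    exact fiber _ _ _ t' ⟨⟨a, rfl⟩, ht0'⟩ ⟨⟨s / a, rfl⟩, by simpa using ht'0⟩ hne hprod hsum
      (fun x hx => hx.2) rfl ht'b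
  -- part 4
  have part4 : ∀ b ∈ h '' {α : K | α ^ (q + 1) = φ s},
      {α | α ∈ {α : K | α ^ (q + 1) = φ s} ∧ h α = b}.ncard = 2 := by
    rintro b ⟨α, hα, rfl⟩
    have hα' : α ^ (q + 1) = φ s := hα
    have h0 := hnorm_ne α hα'
    have hαq : α ^ q ∈ {α : K | α ^ (q + 1) = φ s} := by
      show (α ^ q) ^ (q + 1) = φ s
      rw [← pow_mul, show q * (q + 1) = (q + 1) * q by ring, pow_mul, hα', ← map_pow, hFfix]
    have hprod : α * α ^ q = φ s := by rw [← pow_succ']; exact hα'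
    have hne : α ≠ α ^ q := by
      intro hc
      have hmem : α ∈ Set.range ⇑φ := by rw [hrange]; exact hc.symm
      obtain ⟨a, rfl⟩ := hmem
      apply hs
      refine ⟨a, hinj ?_⟩
      rw [map_pow, sq, ← hprod, ← hc]
    have hsum : α + α ^ q = h α := (hval α (α ^ q) h0 hprod).symm
    have ht'b : h (α ^ q) = h α := by
      rw [hval (α ^ q) α (pow_ne_zero _ h0) (by rw [mul_comm]; exact hprod), ← hsum, add_comm]
    exact fiber _ _ α (α ^ q) hα hαq hne hprod hsum (fun x hx => hnorm_ne x hx) rfl ht'b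
  -- union
  have union : h '' (Set.range ⇑φ \ {0}) ∪ h '' {α : K | α ^ (q + 1) = φ s}
      = Set.range ⇑φ := by
    apply Set.Subset.antisymm
    · rintro b (hb | hb)
      · obtain ⟨t, ht, rfl⟩ := hb
        exact part1 t ht
      · obtain ⟨α, hα, rfl⟩ := hb
        exact part3 α hα
    · rintro b ⟨b₀, rfl⟩
      set d : F := b₀ ^ 2 - 4 * s with hd
      have hd0 : d ≠ 0 := by
        intro hc
        apply hs
        refine ⟨b₀ / 2, ?_⟩
        field_simp
        rw [hd] at hc
        linear_combination hc
      by_cases hdsq : ∃ u : F, u ^ 2 = d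
      · -- b₀ in image of F^×
        obtain ⟨u, hu⟩ := hdsq
        set t₀ : F := (b₀ + u) / 2 with ht₀
        set t₀' : F := (b₀ - u) / 2 with ht₀'
        have hprodF : t₀ * t₀' = s := by
          rw [ht₀, ht₀']
          field_simp
          linear_combination -hu
        have ht₀0 : t₀ ≠ 0 := by
          intro hc
          rw [hc, zero_mul] at hprodF
          exact hs0 hprodF.symm
        have hsumF : t₀ + t₀' = b₀ := by rw [ht₀, ht₀']; field_simp; ring
        refine Or.inl ⟨φ t₀, ⟨⟨t₀, rfl⟩, by simpa using (map_ne_zero φ).mpr ht₀0⟩, ?_⟩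
        rw [hval (φ t₀) (φ t₀') ((map_ne_zero φ).mpr ht₀0) (by rw [← map_mul, hprodF]),
          ← map_add, hsumF]
      · -- b₀ in image of norm set
        obtain ⟨e, he⟩ := aux_square hK hodd hd0
        have he0 : e ≠ 0 := by
          intro hc
          rw [hc, zero_pow (by norm_num : (2 : ℕ) ≠ 0)] at he
          exact (map_ne_zero φ).mpr hd0 he.symm
        set t : K := (φ b₀ + e) / 2 with ht
        set t' : K := (φ b₀ - e) / 2 with ht'
        have hdmap : φ d = φ b₀ ^ 2 - 4 * φ s := by
          rw [hd, map_sub, map_mul, map_pow, map_ofNat]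
        have hprod : t * t' = φ s := by
          rw [ht, ht']
          field_simp
          linear_combination -he - hdmap
        have hsum : t + t' = φ b₀ := by rw [ht, ht']; field_simp; ring
        have ht0 : t ≠ 0 := by
          intro hc
          rw [hc, zero_mul] at hprod
          exact hφs0 hprod.symm
        have heq2 : (e ^ q) ^ 2 = e ^ 2 := by
          rw [← pow_mul, mul_comm, pow_mul, he, ← map_pow, hFfix, ← he]
        have heq : e ^ q = -e := by
          have hz : (e ^ q - e) * (e ^ q + e) = 0 := by linear_combination heq2
          rcases mul_eq_zero.mp hz with h1 | h1
          · exfalso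
            have heF : e ∈ Set.range ⇑φ := by
              rw [hrange]
              exact sub_eq_zero.mp h1
            obtain ⟨u, rfl⟩ := heF
            exact hdsq ⟨u, hinj (by rw [map_pow]; exact he)⟩
          · linear_combination h1
        have htq : t ^ q = t' := by
          have h2q : (2 : K) ^ q = 2 := by
            have h4 : (2 : K) = φ (2 : F) := (map_ofNat φ 2).symm
            rw [h4, ← map_pow, hFfix]
          have hbq : (φ b₀) ^ q = φ b₀ := by rw [← map_pow, hFfix]
          rw [ht, ht', div_pow, hfrob, heq, h2q, hbq]
          ring
        have htnorm : t ^ (q + 1) = φ s := by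
          rw [pow_succ, htq, mul_comm]
          exact hprod
        refine Or.inr ⟨t, htnorm, ?_⟩
        rw [hval t t' ht0 hprod, hsum]
  -- disjointness
  have disj : Disjoint (h '' (Set.range ⇑φ \ {0})) (h '' {α : K | α ^ (q + 1) = φ s}) := by
    rw [Set.disjoint_left]
    rintro b ⟨t, ⟨⟨a, rfl⟩, ht0'⟩, rfl⟩ ⟨α, hα, hαb⟩
    have ha0 : a ≠ 0 := fun hc => ht0' (by simp [hc])
    have ht0 : φ a ≠ 0 := (map_ne_zero _).mpr ha0
    have hα' : α ^ (q + 1) = φ s := hα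
    set t' : K := φ (s / a) with ht'
    have hprod : φ a * t' = φ s := by rw [ht', ← map_mul]; congr 1; field_simp
    have hcases := hquad (h (φ a)) (φ a) t' α hprod
      (hval (φ a) t' ht0 hprod).symm (hnorm_ne α hα') hαb
    have hαF : α ∈ Set.range ⇑φ := by
      rcases hcases with rfl | rfl
      · exact ⟨a, rfl⟩
      · exact ⟨s / a, rfl⟩
    obtain ⟨c, rfl⟩ := hαF
    apply hs
    refine ⟨c, hinj ?_⟩
    rw [map_pow, ← hα', sq, pow_succ, ← map_pow, hFfix]
  exact ⟨part1, part2, part3, part4, union, disj⟩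
end
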